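/- Let k ≥ 2, let A be a real k×k matrix, and let W be an invertible real k×k matrix written in rows as W = (v; V), where v ∈ ℝ^k is the first row of W and V is the remaining (k−1)×k submatrix. Suppose W A = fromBlocks(λ, 0; 0, T) · W for some λ ∈ ℝ with λ ≠ 1 and some real (k−1)×(k−1) matrix T with I − T invertible. Let r, p ∈ ℝ^k be row vectors with p(I − A) = r, set c = r W^{-1}, and write c = (c₁, c̃) with c₁ ∈ ℝ its first entry and c̃ ∈ ℝ^{k−1} the vector of remaining entries. Then p = (c₁/(1−λ)) v + c̃ (I−T)^{-1} V, and consequently ‖p − (c₁/(1−λ)) v‖ ≤ ‖c̃‖ · ‖(I−T)^{-1}‖ · ‖V‖. -/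
import Mathlib


open Matrix BigOperators
open scoped Matrix.Norms.L2Operator

/-- The spectral (ℓ²→ℓ²) operator norm of a real matrix. -/
noncomputable def specNorm {p q : Type*} [Fintype p] [Fintype q] [DecidableEq q]
    (A : Matrix p q ℝ) : ℝ :=
  ‖LinearMap.toContinuousLinearMap (Matrix.toEuclideanLin A)‖

/-- The Euclidean norm of a real vector. -/
noncomputable def euclNorm {p : Type*} [Fintype p] (v : p → ℝ) : ℝ :=
  Real.sqrt (∑ i, v i ^ 2)

lemma specNorm_eq {p q : Type*} [Fintype p] [Fintype q] [DecidableEq p] [DecidableEq q]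
    (A : Matrix p q ℝ) : specNorm A = ‖A‖ := rfl

lemma specNorm_nonneg {p q : Type*} [Fintype p] [Fintype q] [DecidableEq p] [DecidableEq q]
    (A : Matrix p q ℝ) : 0 ≤ specNorm A := norm_nonneg _

lemma euclNorm_eq {p : Type*} [Fintype p] (v : p → ℝ) :
    euclNorm v = ‖(EuclideanSpace.equiv p ℝ).symm v‖ := by
  rw [euclNorm, EuclideanSpace.norm_eq]
  simp [sq_abs]

lemma euclNorm_nonneg {p : Type*} [Fintype p] (v : p → ℝ) : 0 ≤ euclNorm v :=
  Real.sqrt_nonneg _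

lemma euclNorm_vecMul_le {p q : Type*} [Fintype p] [Fintype q] [DecidableEq p] [DecidableEq q]
    (u : p → ℝ) (M : Matrix p q ℝ) :
    euclNorm (u ᵥ* M) ≤ euclNorm u * specNorm M := by
  have h := Mᴴ.l2_opNorm_mulVec ((EuclideanSpace.equiv p ℝ).symm u)
  rw [Matrix.l2_opNorm_conjTranspose] at h
  have hMt : Mᴴ = Mᵀ := by ext i j; simp [Matrix.conjTranspose_apply]
  rw [hMt, Matrix.mulVec_transpose] at h
  simpa [euclNorm_eq, specNorm_eq, mul_comm] using h

/-- With `W` invertible written in rows as `(v; V)`,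
`W A = fromBlocks(λ,0;0,T) W`, `λ ≠ 1`, `I - T` invertible, and `p(I - A) = r`,
`c = r W⁻¹ = (c₁, c̃)`, we have `p = (c₁/(1-λ)) v + c̃ (I-T)⁻¹ V`, and consequently
`‖p - (c₁/(1-λ)) v‖ ≤ ‖c̃‖·‖(I-T)⁻¹‖·‖V‖`. -/
theorem stmt_8 {k : ℕ} (hk : 2 ≤ k)
    (A W : Matrix (Fin 1 ⊕ Fin (k - 1)) (Fin 1 ⊕ Fin (k - 1)) ℝ)
    (hW : IsUnit W)
    (v : Fin 1 ⊕ Fin (k - 1) → ℝ) (hv : v = W (Sum.inl 0))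
    (V : Matrix (Fin (k - 1)) (Fin 1 ⊕ Fin (k - 1)) ℝ) (hV : ∀ j, V j = W (Sum.inr j))
    (lam : ℝ) (T : Matrix (Fin (k - 1)) (Fin (k - 1)) ℝ)
    (hWA : W * A = Matrix.fromBlocks (Matrix.of fun _ _ => lam) 0 0 T * W)
    (hlam : lam ≠ 1) (hT : IsUnit (1 - T))
    (r p : Fin 1 ⊕ Fin (k - 1) → ℝ)
    (hpr : p ᵥ* (1 - A) = r)
    (c : Fin 1 ⊕ Fin (k - 1) → ℝ) (hc : c = r ᵥ* W⁻¹)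
    (c₁ : ℝ) (hc₁ : c₁ = c (Sum.inl 0))
    (ctil : Fin (k - 1) → ℝ) (hctil : ∀ j, ctil j = c (Sum.inr j)) :
    p = (c₁ / (1 - lam)) • v + (ctil ᵥ* (1 - T)⁻¹) ᵥ* V ∧
      euclNorm (p - (c₁ / (1 - lam)) • v) ≤
        euclNorm ctil * specNorm (1 - T)⁻¹ * specNorm V := by
  have hWdet : IsUnit W.det := (Matrix.isUnit_iff_isUnit_det W).mp hW
  have hWinv : W⁻¹ * W = 1 := Matrix.nonsing_inv_mul W hWdet
  have hWinv' : W * W⁻¹ = 1 := Matrix.mul_nonsing_inv W hWdet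
  set x : Fin 1 ⊕ Fin (k - 1) → ℝ := p ᵥ* W⁻¹ with hx
  have hpx : p = x ᵥ* W := by
    rw [hx, Matrix.vecMul_vecMul, hWinv, Matrix.vecMul_one]
  set B : Matrix (Fin 1 ⊕ Fin (k - 1)) (Fin 1 ⊕ Fin (k - 1)) ℝ :=
    Matrix.fromBlocks (Matrix.of fun _ _ => lam) 0 0 T with hB
  -- c = x ᵥ* (1 - B)
  have hcx : c = x ᵥ* (1 - B) := by
    rw [hc, ← hpr, hpx, Matrix.vecMul_vecMul, Matrix.vecMul_vecMul]
    congr 1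
    rw [← Matrix.mul_assoc, Matrix.mul_sub, Matrix.mul_one, hWA, Matrix.sub_mul, hWinv',
      Matrix.mul_assoc, hWinv', Matrix.mul_one]
  -- entries of c
  have hc1 : c₁ = x (Sum.inl 0) * (1 - lam) := by
    rw [hc₁, hcx]
    simp only [Matrix.vecMul, dotProduct, Fintype.sum_sum_type]
    simp [hB, Matrix.sub_apply, Matrix.one_apply, Matrix.fromBlocks]
  have hctilx : ctil = (fun j => x (Sum.inr j)) ᵥ* (1 - T) := by
    funext j
    rw [hctil, hcx]
    simp only [Matrix.vecMul, dotProduct, Fintype.sum_sum_type]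
    simp [hB, Matrix.sub_apply, Matrix.one_apply, Matrix.fromBlocks, Matrix.vecMul,
      dotProduct]
  have hTdet : IsUnit (1 - T).det := (Matrix.isUnit_iff_isUnit_det _).mp hT
  have hx1 : x (Sum.inl 0) = c₁ / (1 - lam) := by
    rw [hc1]
    field_simp [sub_ne_zero.mpr (Ne.symm hlam)]
  have hxr : (fun j => x (Sum.inr j)) = ctil ᵥ* (1 - T)⁻¹ := by
    rw [hctilx, Matrix.vecMul_vecMul, Matrix.mul_nonsing_inv _ hTdet, Matrix.vecMul_one]
  -- decomposition of p
  have hdecomp : p = (c₁ / (1 - lam)) • v + (ctil ᵥ* (1 - T)⁻¹) ᵥ* V := by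
    rw [← hxr]
    funext j
    rw [hpx]
    simp only [Matrix.vecMul, dotProduct, Fintype.sum_sum_type, Pi.add_apply,
      Pi.smul_apply, smul_eq_mul]
    rw [hv]
    simp only [Fin.sum_univ_one, hx1]
    congr 1
    exact Finset.sum_congr rfl fun i _ => by rw [hV]
  refine ⟨hdecomp, ?_⟩
  have hdiff : p - (c₁ / (1 - lam)) • v = (ctil ᵥ* (1 - T)⁻¹) ᵥ* V := by
    rw [hdecomp]; abel
  rw [hdiff]
  calc euclNorm ((ctil ᵥ* (1 - T)⁻¹) ᵥ* V)
      ≤ euclNorm (ctil ᵥ* (1 - T)⁻¹) * specNorm V := euclNorm_vecMul_le _ _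
    _ ≤ (euclNorm ctil * specNorm (1 - T)⁻¹) * specNorm V := by
        apply mul_le_mul_of_nonneg_right (euclNorm_vecMul_le _ _) (specNorm_nonneg _)
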